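/- For three nonzero complex null 4-vectors with p_1 + p_2 + p_3 = 0 and factorizations p_i^{AA'} = p_i^A p̃_i^{A'}, if the primed spinors p̃_i are pairwise proportional (generic '−−+' configuration) then the spinor brackets ⟨p_1 p_2⟩ = p_{1A} p_2^A, ⟨p_2 p_3⟩, ⟨p_3 p_1⟩ are all nonzero unless all three null vectors are pairwise proportional. -/

import Mathlib

/-- The antisymmetric spinor bracket `⟨p q⟩ = p₀ q₁ - p₁ q₀`. -/
noncomputable def bk (p q : Fin 2 → ℂ) : ℂ := p 0 * q 1 - p 1 * q 0

lemma li_of_bk_ne (u v : Fin 2 → ℂ) (h : bk u v ≠ 0) : LinearIndependent ℂ ![u, v] := by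
  rw [LinearIndependent.pair_iff]
  intro s t hst
  have h0 : s * u 0 + t * v 0 = 0 := congrFun hst 0
  have h1 : s * u 1 + t * v 1 = 0 := congrFun hst 1
  unfold bk at h
  constructor
  · have : s * (u 0 * v 1 - u 1 * v 0) = 0 := by linear_combination v 1 * h0 - v 0 * h1
    rcases mul_eq_zero.1 this with h' | h' <;> tauto
  · have : t * (u 0 * v 1 - u 1 * v 0) = 0 := by linear_combination u 0 * h1 - u 1 * h0
    rcases mul_eq_zero.1 this with h' | h' <;> tauto

lemma prop_of_bk (u v : Fin 2 → ℂ) (hu : u ≠ 0) (h : bk u v = 0) : ∃ c : ℂ, v = c • u := by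
  unfold bk at h
  have hu' : u 0 ≠ 0 ∨ u 1 ≠ 0 := by
    by_contra hc
    push_neg at hc
    exact hu (funext fun x => by fin_cases x <;> simp [hc.1, hc.2])
  rcases hu' with h0 | h1
  · refine ⟨v 0 / u 0, funext fun x => ?_⟩
    fin_cases x
    · simp [Pi.smul_apply]; field_simp
    · simp [Pi.smul_apply]; field_simp; linear_combination h
  · refine ⟨v 1 / u 1, funext fun x => ?_⟩
    fin_cases x
    · simp [Pi.smul_apply]; field_simp; linear_combination -h
    · simp [Pi.smul_apply]; field_simp

lemma all_prop (a : Fin 3 → Fin 2 → ℂ) (l1 l2 : ℂ) (hl1 : l1 ≠ 0) (hl2 : l2 ≠ 0)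
    (ha0 : a 0 ≠ 0)
    (key : ∀ r, a 0 r + l1 * a 1 r + l2 * a 2 r = 0)
    (h : (∃ d : ℂ, a 1 = d • a 0) ∨ (∃ d : ℂ, a 2 = d • a 0) ∨ (∃ d : ℂ, a 2 = d • a 1)) :
    ∀ m, ∃ μ : ℂ, a m = μ • a 0 := by
  rcases h with ⟨d, hd⟩ | ⟨d, hd⟩ | ⟨d, hd⟩
  · intro m
    fin_cases m
    · exact ⟨1, by simp⟩
    · exact ⟨d, hd⟩
    · show ∃ μ : ℂ, a 2 = μ • a 0
      refine ⟨-(1 + l1 * d) / l2, funext fun r => ?_⟩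
      have h1r : a 1 r = d * a 0 r := by rw [hd]; simp
      have hk := key r
      have h2 : l2 * a 2 r = -(1 + l1 * d) * a 0 r := by linear_combination hk - l1 * h1r
      simp only [Pi.smul_apply, smul_eq_mul]
      field_simp
      linear_combination h2
  · intro m
    fin_cases m
    · exact ⟨1, by simp⟩
    · show ∃ μ : ℂ, a 1 = μ • a 0
      refine ⟨-(1 + l2 * d) / l1, funext fun r => ?_⟩
      have h2r : a 2 r = d * a 0 r := by rw [hd]; simp
      have hk := key r
      have h1 : l1 * a 1 r = -(1 + l2 * d) * a 0 r := by linear_combination hk - l2 * h2r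
      simp only [Pi.smul_apply, smul_eq_mul]
      field_simp
      linear_combination h1
    · exact ⟨d, hd⟩
  · intro m
    have he : ∀ r, a 0 r = -(l1 + l2 * d) * a 1 r := by
      intro r
      have h2r : a 2 r = d * a 1 r := by rw [hd]; simp
      linear_combination key r - l2 * h2r
    have hene : -(l1 + l2 * d) ≠ 0 := by
      intro h0
      apply ha0
      funext r
      have := he r
      rw [h0] at this
      simpa using this
    fin_cases m
    · exact ⟨1, by simp⟩
    · show ∃ μ : ℂ, a 1 = μ • a 0
      refine ⟨(-(l1 + l2 * d))⁻¹, funext fun r => ?_⟩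
      simp only [Pi.smul_apply, smul_eq_mul]
      rw [he r, inv_mul_cancel_left₀ hene]
    · show ∃ μ : ℂ, a 2 = μ • a 0
      refine ⟨d * (-(l1 + l2 * d))⁻¹, funext fun r => ?_⟩
      have h2r : a 2 r = d * a 1 r := by rw [hd]; simp
      simp only [Pi.smul_apply, smul_eq_mul]
      rw [h2r, he r, mul_assoc, inv_mul_cancel_left₀ hene]

/-- For three nonzero null momenta `p_i^{AA'} = p_i^A p̃_i^{A'}` summing to zero, if
the primed spinors are pairwise proportional (the generic `--+` configuration) then
the unprimed brackets `⟨p_i p_j⟩` are all nonzero, unless all three null vectors are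
pairwise proportional. -/
theorem brackets_nonzero_in_mhv_configuration
    (a b : Fin 3 → Fin 2 → ℂ) (ha : ∀ i, a i ≠ 0) (hb : ∀ i, b i ≠ 0)
    (hsum : ∑ i : Fin 3, Matrix.vecMulVec (a i) (b i) = 0)
    (hbprop : ∀ i j : Fin 3, ¬ LinearIndependent ℂ ![b i, b j])
    (hnotall : ¬ ∀ i j : Fin 3, ∃ c : ℂ,
      Matrix.vecMulVec (a j) (b j) = c • Matrix.vecMulVec (a i) (b i)) :
    ∀ i j : Fin 3, i ≠ j → bk (a i) (a j) ≠ 0 := by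
  have hbk : ∀ i j : Fin 3, bk (b i) (b j) = 0 := fun i j => by
    by_contra h; exact hbprop i j (li_of_bk_ne _ _ h)
  have hlam : ∀ i, ∃ l : ℂ, b i = l • b 0 := fun i => prop_of_bk _ _ (hb 0) (hbk 0 i)
  choose lam hlam using hlam
  have hlamne : ∀ i, lam i ≠ 0 := fun i h => hb i (by rw [hlam i, h, zero_smul])
  have hsum' : ∀ r s : Fin 2, a 0 r * b 0 s + a 1 r * b 1 s + a 2 r * b 2 s = 0 := by
    intro r s
    have h := congrFun (congrFun hsum r) s
    simpa [Matrix.sum_apply, Fin.sum_univ_three, Matrix.vecMulVec_apply] using h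
  obtain ⟨s, hs⟩ : ∃ s, b 0 s ≠ 0 := by
    by_contra hc
    push_neg at hc
    exact hb 0 (funext fun x => hc x)
  have key : ∀ r, a 0 r + lam 1 * a 1 r + lam 2 * a 2 r = 0 := by
    intro r
    have h1 : b 1 s = lam 1 * b 0 s := by rw [hlam 1]; simp
    have h2 : b 2 s = lam 2 * b 0 s := by rw [hlam 2]; simp
    have h := hsum' r s
    rw [h1, h2] at h
    have h' : (a 0 r + lam 1 * a 1 r + lam 2 * a 2 r) * b 0 s = 0 := by ring_nf; linear_combination h
    rcases mul_eq_zero.1 h' with h'' | h''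
    · exact h''
    · exact absurd h'' hs
  intro i j hij hzero
  apply hnotall
  -- bk (a i) (a j) = 0 ⇒ some pair proportional
  have hpair : (∃ d : ℂ, a 1 = d • a 0) ∨ (∃ d : ℂ, a 2 = d • a 0) ∨ (∃ d : ℂ, a 2 = d • a 1) := by
    have hanti : ∀ u v : Fin 2 → ℂ, bk u v = 0 → bk v u = 0 := by
      intro u v h; unfold bk at *; linear_combination -h
    fin_cases i <;> fin_cases j
    · exact absurd rfl hij
    · exact Or.inl (prop_of_bk _ _ (ha 0) hzero)
    · exact Or.inr (Or.inl (prop_of_bk _ _ (ha 0) hzero))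
    · exact Or.inl (prop_of_bk _ _ (ha 0) (hanti _ _ hzero))
    · exact absurd rfl hij
    · exact Or.inr (Or.inr (prop_of_bk _ _ (ha 1) hzero))
    · exact Or.inr (Or.inl (prop_of_bk _ _ (ha 0) (hanti _ _ hzero)))
    · exact Or.inr (Or.inr (prop_of_bk _ _ (ha 1) (hanti _ _ hzero)))
    · exact absurd rfl hij
  have hall := all_prop a (lam 1) (lam 2) (hlamne 1) (hlamne 2) (ha 0) key hpair
  choose μ hμ using hall
  have hμne : ∀ m, μ m ≠ 0 := fun m h => ha m (by rw [hμ m, h, zero_smul])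
  intro i' j'
  refine ⟨(μ j' * lam j') / (μ i' * lam i'), ?_⟩
  funext r t
  have haj : a j' r = μ j' * a 0 r := by rw [hμ j']; simp
  have hai : a i' r = μ i' * a 0 r := by rw [hμ i']; simp
  have hbj : b j' t = lam j' * b 0 t := by rw [hlam j']; simp
  have hbi : b i' t = lam i' * b 0 t := by rw [hlam i']; simp
  simp only [Matrix.smul_apply, Matrix.vecMulVec_apply, smul_eq_mul]
  rw [haj, hbj, hai, hbi]
  field_simp [hμne i', hlamne i']
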